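/- Let M be an n×n matrix over RatFunc ℂ (n ≥ 1) such that M - X • 1 is invertible, and let S(M) := (M - X • 1)⁻¹ + X • 1 be its spectral inverse. Then every complex root of (det (M - X • 1)).denom lies in the Gershgorin-type region Γ(S(M)); that is, the inverse spectrum of M is contained in the Gershgorin-type region of the polynomial extension of S(M). -/

import Mathlib

/-!
Put `B = M - X • 1`, so that `S(M) - X • 1 = B⁻¹` and `Ā - X • 1 = D * B⁻¹` with
`D = diagonal L`. The denominators of the row `i` of `B⁻¹` divide `L i`, so `Ā - X • 1` is the
image of a polynomial matrix `Q`, and `det Q * det B = ∏ i, L i`. Since the numerator of `det B`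
is coprime to its denominator, the denominator divides `det Q`; thus `Q(λ)` is singular at every
`λ ∈ σ⁻¹(M)`, and the Gershgorin disc theorem for `Q(λ)` places `λ` in `Γ(S(M))`.
-/

set_option synthInstance.maxHeartbeats 1000000
set_option maxHeartbeats 1000000

open Matrix Polynomial

/-- The polynomial extension `Ā` of a matrix over `RatFunc ℂ`: with
`L i = ∏ j (A i j).denom`, set `Ā i j = L i * A i j` off the diagonal and
`Ā i i = L i * (A i i - X) + X` on the diagonal. -/
noncomputable def polyExt {α : Type} [Fintype α] [DecidableEq α]
    (A : Matrix α α (RatFunc ℂ)) : Matrix α α (RatFunc ℂ) :=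
  Matrix.of fun i j =>
    if i = j then
      algebraMap (Polynomial ℂ) (RatFunc ℂ) (∏ k, (A i k).denom) * (A i i - RatFunc.X) +
        RatFunc.X
    else
      algebraMap (Polynomial ℂ) (RatFunc ℂ) (∏ k, (A i k).denom) * A i j

/-- The Gershgorin-type region of a matrix over `RatFunc ℂ`. -/
noncomputable def gershRegion {α : Type} [Fintype α] [DecidableEq α]
    (A : Matrix α α (RatFunc ℂ)) : Set ℂ :=
  ⋃ i : α, {lam : ℂ |
    ‖lam - RatFunc.eval (RingHom.id ℂ) lam (polyExt A i i)‖ ≤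
      ∑ j ∈ Finset.univ.erase i, ‖RatFunc.eval (RingHom.id ℂ) lam (polyExt A i j)‖}

/-- The spectral inverse of a square matrix over `RatFunc ℂ`:
`S(M) = (M - X•1)⁻¹ + X•1`. -/
noncomputable def specInv {α : Type} [Fintype α] [DecidableEq α]
    (M : Matrix α α (RatFunc ℂ)) : Matrix α α (RatFunc ℂ) :=
  (M - (RatFunc.X : RatFunc ℂ) • 1)⁻¹ + (RatFunc.X : RatFunc ℂ) • 1

namespace RatFunc

variable {K : Type*} [Field K]

theorem denom_dvd_iff_exists_algebraMap_mul_eq {f : RatFunc K} {p : K[X]} :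
    f.denom ∣ p ↔ ∃ q : K[X], algebraMap K[X] (RatFunc K) p * f = algebraMap _ _ q := by
  rcases eq_or_ne p 0 with rfl | hp
  · exact ⟨fun _ => ⟨0, by simp⟩, fun _ => dvd_zero _⟩
  rw [denom_dvd hp]
  refine exists_congr fun q => ?_
  rw [eq_div_iff (algebraMap_ne_zero hp), mul_comm f]

theorem denom_add_algebraMap_dvd (f : RatFunc K) (p : K[X]) :
    (f + algebraMap _ _ p).denom ∣ f.denom := by
  simpa using denom_add_dvd f (algebraMap _ _ p)

end RatFunc

theorem Matrix.exists_norm_le_sum_norm_of_det_eq_zero {𝕜 α : Type*} [NormedField 𝕜]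
    [Fintype α] [DecidableEq α] {A : Matrix α α 𝕜} (h : A.det = 0) :
    ∃ i, ‖A i i‖ ≤ ∑ j ∈ Finset.univ.erase i, ‖A i j‖ := by
  by_contra! hlt
  exact det_ne_zero_of_sum_row_lt_diag hlt h

section PolyExt

variable {α : Type} [Fintype α] [DecidableEq α]

local notation "φ" => algebraMap (Polynomial ℂ) (RatFunc ℂ)

theorem polyExt_sub_X_smul_one (A : Matrix α α (RatFunc ℂ)) :
    polyExt A - (RatFunc.X : RatFunc ℂ) • 1 =
      diagonal (fun i => φ (∏ k, (A i k).denom)) * (A - (RatFunc.X : RatFunc ℂ) • 1) := by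
  ext i j
  rw [diagonal_mul, Matrix.sub_apply, Matrix.sub_apply, polyExt, of_apply]
  split_ifs with hij <;> simp [hij]

theorem exists_map_eq_polyExt_sub_X_smul_one (A : Matrix α α (RatFunc ℂ)) :
    ∃ Q : Matrix α α ℂ[X], Q.map φ = polyExt A - (RatFunc.X : RatFunc ℂ) • 1 := by
  have hpoly : ∀ i j, ∃ q : ℂ[X],
      φ (∏ k, (A i k).denom) * (A - (RatFunc.X : RatFunc ℂ) • 1) i j = φ q := by
    intro i j
    refine RatFunc.denom_dvd_iff_exists_algebraMap_mul_eq.mp ?_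
    have hsub :
        (A - (RatFunc.X : RatFunc ℂ) • 1) i j = A i j + φ (-if i = j then X else 0) := by
      split_ifs with hij <;> simp [hij, sub_eq_add_neg, RatFunc.algebraMap_X]
    rw [hsub]
    exact (RatFunc.denom_add_algebraMap_dvd _ _).trans
      (Finset.dvd_prod_of_mem _ (Finset.mem_univ j))
  choose Q hQ using hpoly
  refine ⟨of Q, ?_⟩
  ext i j
  rw [polyExt_sub_X_smul_one, diagonal_mul, map_apply, of_apply, hQ]

theorem mem_gershRegion_of_eval_det_eq_zero {A : Matrix α α (RatFunc ℂ)}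
    {Q : Matrix α α ℂ[X]} (hQ : Q.map φ = polyExt A - (RatFunc.X : RatFunc ℂ) • 1)
    {lam : ℂ} (h : Q.det.eval lam = 0) :
    lam ∈ gershRegion A := by
  have hdet : (Q.map (evalRingHom lam)).det = 0 := by
    rw [← RingHom.mapMatrix_apply, ← RingHom.map_det, coe_evalRingHom, h]
  obtain ⟨i, hi⟩ := exists_norm_le_sum_norm_of_det_eq_zero hdet
  have heval : ∀ j, RatFunc.eval (RingHom.id ℂ) lam (polyExt A i j) =
      (Q i j).eval lam + if i = j then lam else 0 := by
    intro j
    have hij := congrFun (congrFun hQ i) j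
    rw [map_apply, Matrix.sub_apply, eq_sub_iff_add_eq] at hij
    rcases eq_or_ne i j with rfl | hne
    · simp [← hij, ← RatFunc.algebraMap_X, ← map_add, RatFunc.eval_algebraMap]
    · simp [← hij, hne, RatFunc.eval_algebraMap]
  have hdiag : lam - RatFunc.eval (RingHom.id ℂ) lam (polyExt A i i) = -(Q i i).eval lam := by
    rw [heval, if_pos rfl]
    ring
  refine Set.mem_iUnion.mpr ⟨i, ?_⟩
  rw [Set.mem_ofPred_eq, hdiag, norm_neg]
  refine hi.trans_eq (Finset.sum_congr rfl fun j hj => ?_)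
  rw [heval, if_neg (Finset.ne_of_mem_erase hj).symm, add_zero]
  rfl

end PolyExt

theorem invSpec_subset_gershRegion_specInv_general {n : ℕ}
    (M : Matrix (Fin n) (Fin n) (RatFunc ℂ))
    (hinv : IsUnit (M - (RatFunc.X : RatFunc ℂ) • 1))
    (lam : ℂ) (h : (((M - (RatFunc.X : RatFunc ℂ) • 1).det).denom).eval lam = 0) :
    lam ∈ gershRegion (specInv M) := by
  obtain ⟨Q, hQ⟩ := exists_map_eq_polyExt_sub_X_smul_one (specInv M)
  refine mem_gershRegion_of_eval_det_eq_zero hQ (eval_eq_zero_of_dvd_of_eval_eq_zero ?_ h)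
  refine RatFunc.denom_dvd_iff_exists_algebraMap_mul_eq.mpr
    ⟨∏ i, ∏ k, (specInv M i k).denom, ?_⟩
  have hB := (isUnit_iff_isUnit_det _).mp hinv |>.ne_zero
  rw [RingHom.map_det, RingHom.mapMatrix_apply, hQ, polyExt_sub_X_smul_one, specInv,
    add_sub_cancel_right, det_mul, det_diagonal, det_nonsing_inv, Ring.inverse_eq_inv',
    inv_mul_cancel_right₀ hB, map_prod]

theorem invSpec_subset_gershRegion_specInv {n : ℕ} (hn : 1 ≤ n)
    (M : Matrix (Fin n) (Fin n) (RatFunc ℂ))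
    (hinv : IsUnit (M - (RatFunc.X : RatFunc ℂ) • 1))
    (lam : ℂ) (h : (((M - (RatFunc.X : RatFunc ℂ) • 1).det).denom).eval lam = 0) :
    lam ∈ gershRegion (specInv M) :=
  invSpec_subset_gershRegion_specInv_general M hinv lam h
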